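/- arXiv:2111.09810 — 3 statements merged into one kernel-verified Lean document; each statement's English description precedes it below -/
import Mathlib

section
/- Let G be a group and let L = ⊕_{g∈G} L^(g) be a G-graded Lie algebra (meaning [L^(g), L^(h)] ⊆ L^(gh)). If [L^(g₁), L^(g₂), …, L^(g_k)] ≠ 0 for some g₁,…,g_k ∈ G (left-normed commutator of graded components), then gᵢgⱼ = gⱼgᵢ for all 1 ≤ i,j ≤ k. -/
/-- The span of all brackets `⁅a, b⁆` with `a ∈ A`, `b ∈ B`. -/
def bracketSpan {F L : Type*} [Field F] [LieRing L] [LieAlgebra F L]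
    (A B : Submodule F L) : Submodule F L :=
  Submodule.span F {z : L | ∃ a ∈ A, ∃ b ∈ B, z = ⁅a, b⁆}

/-- The left-normed commutator `[A₁, A₂, …, A_k] = [[A₁,…,A_{k−1}], A_k]` of a family of
subspaces, defined by folding `bracketSpan` from the left. -/
def leftNormedBracket {F L : Type*} [Field F] [LieRing L] [LieAlgebra F L]
    (A : Submodule F L) (l : List (Submodule F L)) : Submodule F L :=
  l.foldl bracketSpan A

/-!
Write `D(g; t)` (`gradedBracket V g t`) for the left-normed bracket of the components
`V g, V t₁, …, V tₙ`; it lies in `V (g * t.prod)`. If `a` and `b` do not commute, then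
`[V a, V b]` lies in `V (ab) ⊓ V (ba) = 0`, and the Jacobi identity gives
`[[U, V a], V b] ⊆ [[U, V b], V a]`, so for homogeneous `U` this space lies in two distinct
components and vanishes. Hence in a nonzero bracket `D(g; u ++ [a, b])` the last two degrees
commute.

For the remaining pairs argue by induction on the length: the prefix `D(g; u ++ [a])` is nonzero,
so its degrees commute pairwise. For `c` in `g :: u`, the Jacobi identity gives
`D(g; u ++ [a, b]) ⊆ D(g; u ++ [b, a]) + D(g; u ++ [ab])`. If the second summand is nonzero, `c`
commutes with `ab` and with `a`, hence with `b`; otherwise the first one is, and then so is its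
shorter prefix `D(g; u ++ [b])`, in which `c` commutes with `b`.
-/

namespace bracketSpan

variable {F L : Type*} [Field F] [LieRing L] [LieAlgebra F L] {A A' B B' C : Submodule F L}

theorem lie_mem {a b : L} (ha : a ∈ A) (hb : b ∈ B) : ⁅a, b⁆ ∈ bracketSpan A B :=
  Submodule.subset_span ⟨a, ha, b, hb, rfl⟩

theorem le_of_forall_lie_mem (h : ∀ a ∈ A, ∀ b ∈ B, ⁅a, b⁆ ∈ C) :
    bracketSpan A B ≤ C := by
  rw [bracketSpan, Submodule.span_le]
  rintro _ ⟨a, ha, b, hb, rfl⟩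
  exact h a ha b hb

theorem mono (hA : A ≤ A') (hB : B ≤ B') : bracketSpan A B ≤ bracketSpan A' B' :=
  le_of_forall_lie_mem fun _ ha _ hb => lie_mem (hA ha) (hB hb)

theorem bot_left (B : Submodule F L) : bracketSpan ⊥ B = ⊥ :=
  le_bot_iff.1 <| le_of_forall_lie_mem fun a ha b _ => by
    rw [Submodule.mem_bot] at ha ⊢
    rw [ha, zero_lie]

theorem bot_right (A : Submodule F L) : bracketSpan A ⊥ = ⊥ :=
  le_bot_iff.1 <| le_of_forall_lie_mem fun a _ b hb => by
    rw [Submodule.mem_bot] at hb ⊢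
    rw [hb, lie_zero]

theorem comm_le (A B : Submodule F L) : bracketSpan A B ≤ bracketSpan B A :=
  le_of_forall_lie_mem fun _ ha _ hb => by
    rw [← lie_skew]
    exact Submodule.neg_mem _ (lie_mem hb ha)

theorem jacobi_le (A B C : Submodule F L) :
    bracketSpan (bracketSpan A B) C ≤
      bracketSpan (bracketSpan A C) B ⊔ bracketSpan A (bracketSpan B C) := by
  refine le_of_forall_lie_mem fun w hw c hc => ?_
  induction hw using Submodule.span_induction with
  | mem _ hx =>
    obtain ⟨a, ha, b, hb, rfl⟩ := hx
    have jacobi : ⁅⁅a, b⁆, c⁆ = ⁅⁅a, c⁆, b⁆ + ⁅a, ⁅b, c⁆⁆ := by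
      rw [leibniz_lie a b c, ← lie_skew ⁅a, c⁆ b]
      abel
    rw [jacobi]
    exact Submodule.add_mem_sup (lie_mem (lie_mem ha hc) hb) (lie_mem ha (lie_mem hb hc))
  | zero => rw [zero_lie]; exact Submodule.zero_mem _
  | add x y _ _ hx hy => rw [add_lie]; exact Submodule.add_mem _ hx hy
  | smul r x _ hx => rw [smul_lie]; exact Submodule.smul_mem _ _ hx

end bracketSpan

theorem leftNormedBracket_bot {F L : Type*} [Field F] [LieRing L] [LieAlgebra F L] :
    ∀ l : List (Submodule F L), leftNormedBracket ⊥ l = ⊥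
  | [] => rfl
  | B :: l => by
    rw [leftNormedBracket, List.foldl_cons, bracketSpan.bot_left]
    exact leftNormedBracket_bot l

theorem iSupIndep.eq_bot_of_le_of_le {α ι : Type*} [CompleteLattice α] {V : ι → α}
    (hind : iSupIndep V) {x : α} {i j : ι} (hi : x ≤ V i) (hj : x ≤ V j) (hne : i ≠ j) :
    x = ⊥ :=
  disjoint_self.1 ((hind.pairwiseDisjoint hne).mono hi hj)

theorem List.mem_cons_append_singleton {α : Type*} {x g b : α} {u : List α} :
    x ∈ g :: (u ++ [b]) ↔ x ∈ g :: u ∨ x = b := by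
  simp only [List.mem_cons, List.mem_append, List.not_mem_nil, or_false, or_assoc]

theorem forall_mem_commute_cons_append_singleton {M : Type*} [Mul M] {g b : M} {u : List M}
    (hu : ∀ x ∈ g :: u, ∀ y ∈ g :: u, Commute x y) (hb : ∀ x ∈ g :: u, Commute x b) :
    ∀ x ∈ g :: (u ++ [b]), ∀ y ∈ g :: (u ++ [b]), Commute x y := by
  intro x hx y hy
  rcases List.mem_cons_append_singleton.1 hx with hx | hx <;>
    rcases List.mem_cons_append_singleton.1 hy with hy | hy
  · exact hu x hx y hy
  · exact hy ▸ hb x hx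
  · exact hx ▸ (hb y hy).symm
  · exact hx ▸ hy ▸ Commute.refl b

section GradedBracket

variable {F L G : Type*} [Field F] [LieRing L] [LieAlgebra F L] {V : G → Submodule F L}

def gradedBracket (V : G → Submodule F L) (g : G) (t : List G) : Submodule F L :=
  leftNormedBracket (V g) (t.map V)

theorem gradedBracket_append (g : G) (t s : List G) :
    gradedBracket V g (t ++ s) = leftNormedBracket (gradedBracket V g t) (s.map V) := by
  simp only [gradedBracket, leftNormedBracket, List.map_append, List.foldl_append]

theorem gradedBracket_append_singleton (g : G) (t : List G) (a : G) :
    gradedBracket V g (t ++ [a]) = bracketSpan (gradedBracket V g t) (V a) :=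
  gradedBracket_append g t [a]

theorem gradedBracket_append_pair (g : G) (t : List G) (a b : G) :
    gradedBracket V g (t ++ [a, b]) =
      bracketSpan (bracketSpan (gradedBracket V g t) (V a)) (V b) :=
  gradedBracket_append g t [a, b]

theorem gradedBracket_ne_bot_of_append {g : G} {t s : List G}
    (h : gradedBracket V g (t ++ s) ≠ ⊥) : gradedBracket V g t ≠ ⊥ := by
  intro ht
  rw [gradedBracket_append, ht, leftNormedBracket_bot] at h
  exact h rfl

end GradedBracket

section Graded

variable {F L G : Type*} [Field F] [LieRing L] [LieAlgebra F L] [Group G]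
  {V : G → Submodule F L}
  (hgr : ∀ g h : G, ∀ x ∈ V g, ∀ y ∈ V h, ⁅x, y⁆ ∈ V (g * h))
include hgr

theorem bracketSpan_le_of_le {U : Submodule F L} {c : G} (hU : U ≤ V c) (a : G) :
    bracketSpan U (V a) ≤ V (c * a) :=
  bracketSpan.le_of_forall_lie_mem fun x hx y hy => hgr c a x (hU hx) y hy

theorem bracketSpan_eq_bot_of_not_commute (hind : iSupIndep V) {a b : G}
    (hab : ¬Commute a b) : bracketSpan (V a) (V b) = ⊥ :=
  hind.eq_bot_of_le_of_le (bracketSpan_le_of_le hgr le_rfl b)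
    ((bracketSpan.comm_le _ _).trans (bracketSpan_le_of_le hgr le_rfl a)) hab

theorem bracketSpan_bracketSpan_eq_bot_of_not_commute (hind : iSupIndep V)
    {U : Submodule F L} {c a b : G} (hU : U ≤ V c) (hab : ¬Commute a b) :
    bracketSpan (bracketSpan U (V a)) (V b) = ⊥ := by
  have hswap :
      bracketSpan (bracketSpan U (V a)) (V b) ≤ bracketSpan (bracketSpan U (V b)) (V a) := by
    simpa only [bracketSpan_eq_bot_of_not_commute hgr hind hab, bracketSpan.bot_right,
      sup_bot_eq] using bracketSpan.jacobi_le U (V a) (V b)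
  refine hind.eq_bot_of_le_of_le
    (bracketSpan_le_of_le hgr (bracketSpan_le_of_le hgr hU a) b)
    (hswap.trans (bracketSpan_le_of_le hgr (bracketSpan_le_of_le hgr hU b) a)) ?_
  rw [mul_assoc, mul_assoc]
  exact fun h => hab (mul_left_cancel h)

theorem gradedBracket_le (g : G) (t : List G) : gradedBracket V g t ≤ V (g * t.prod) := by
  induction t using List.reverseRecOn with
  | nil => simp [gradedBracket, leftNormedBracket]
  | append_singleton t a ih =>
    rw [gradedBracket_append_singleton, List.prod_append, List.prod_singleton, ← mul_assoc]
    exact bracketSpan_le_of_le hgr ih a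

theorem gradedBracket_append_pair_le (g : G) (t : List G) (a b : G) :
    gradedBracket V g (t ++ [a, b]) ≤
      gradedBracket V g (t ++ [b, a]) ⊔ gradedBracket V g (t ++ [a * b]) := by
  rw [gradedBracket_append_pair, gradedBracket_append_pair, gradedBracket_append_singleton]
  exact (bracketSpan.jacobi_le _ _ _).trans
    (sup_le_sup_left (bracketSpan.mono le_rfl (bracketSpan_le_of_le hgr le_rfl b)) _)

theorem commute_of_gradedBracket_append_pair_ne_bot (hind : iSupIndep V) {g a b : G}
    {t : List G} (h : gradedBracket V g (t ++ [a, b]) ≠ ⊥) : Commute a b := by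
  by_contra hab
  rw [gradedBracket_append_pair,
    bracketSpan_bracketSpan_eq_bot_of_not_commute hgr hind (gradedBracket_le hgr g t) hab] at h
  exact h rfl

theorem commute_of_mem_of_gradedBracket_ne_bot (hind : iSupIndep V) (g : G) (t : List G)
    (h : gradedBracket V g t ≠ ⊥) : ∀ x ∈ g :: t, ∀ y ∈ g :: t, Commute x y := by
  rcases List.eq_nil_or_concat' t with rfl | ⟨u, b, rfl⟩
  · simp only [List.mem_singleton]
    rintro x hx y hy
    exact hx ▸ hy ▸ Commute.refl g
  have hpre := commute_of_mem_of_gradedBracket_ne_bot hind g u (gradedBracket_ne_bot_of_append h)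
  refine forall_mem_commute_cons_append_singleton hpre ?_
  rcases List.eq_nil_or_concat' u with rfl | ⟨u, a, rfl⟩
  · simp only [List.mem_singleton]
    rintro c rfl
    by_contra hcb
    exact h (bracketSpan_eq_bot_of_not_commute hgr hind hcb)
  rw [List.append_assoc, List.singleton_append] at h
  intro c hc
  rcases List.mem_cons_append_singleton.1 hc with hc | rfl
  swap
  · exact commute_of_gradedBracket_append_pair_ne_bot hgr hind h
  by_cases hprod : gradedBracket V g (u ++ [a * b]) = ⊥
  · have hba : gradedBracket V g (u ++ [b, a]) ≠ ⊥ := fun hba => h <| le_bot_iff.1 <|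
      (gradedBracket_append_pair_le hgr g u a b).trans (by rw [hba, hprod, sup_bot_eq])
    rw [← List.singleton_append, ← List.append_assoc] at hba
    exact commute_of_mem_of_gradedBracket_ne_bot hind g (u ++ [b])
      (gradedBracket_ne_bot_of_append hba) c (List.mem_cons_append_singleton.2 (.inl hc))
      b (List.mem_cons_append_singleton.2 (.inr rfl))
  · have hcab := commute_of_mem_of_gradedBracket_ne_bot hind g (u ++ [a * b]) hprod
      c (List.mem_cons_append_singleton.2 (.inl hc))
      (a * b) (List.mem_cons_append_singleton.2 (.inr rfl))
    have hca := hpre c (List.mem_cons_append_singleton.2 (.inl hc))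
      a (List.mem_cons_append_singleton.2 (.inr rfl))
    simpa only [inv_mul_cancel_left] using hca.inv_right.mul_right hcab
termination_by t.length

end Graded

/-- Let `G` be a group and `L = ⊕_{g∈G} L^(g)` a `G`-graded Lie algebra.  If the left-normed
commutator `[L^(g₁), L^(g₂), …, L^(g_k)]` is nonzero for some `g₁,…,g_k ∈ G`, then
`gᵢgⱼ = gⱼgᵢ` for all `1 ≤ i, j ≤ k`. -/
theorem stmt2 (F L G : Type*) [Field F] [LieRing L] [LieAlgebra F L] [Group G]
    [DecidableEq G] (V : G → Submodule F L) (hdec : DirectSum.IsInternal V)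
    (hgr : ∀ g h : G, ∀ x ∈ V g, ∀ y ∈ V h, ⁅x, y⁆ ∈ V (g * h))
    (k : ℕ) (gs : Fin (k + 1) → G)
    (hne : leftNormedBracket (V (gs 0)) (List.ofFn fun i : Fin k => V (gs i.succ)) ≠ ⊥) :
    ∀ i j : Fin (k + 1), gs i * gs j = gs j * gs i := by
  have hword : gs 0 :: List.ofFn (fun i : Fin k => gs i.succ) = List.ofFn gs :=
    List.ofFn_succ.symm
  have hmem (i : Fin (k + 1)) : gs i ∈ gs 0 :: List.ofFn (fun i : Fin k => gs i.succ) :=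
    hword ▸ List.mem_ofFn.2 ⟨i, rfl⟩
  have hne' : gradedBracket V (gs 0) (List.ofFn fun i : Fin k => gs i.succ) ≠ ⊥ := by
    rwa [gradedBracket, List.map_ofFn]
  intro i j
  exact commute_of_mem_of_gradedBracket_ne_bot hgr hdec.submodule_iSupIndep (gs 0) _ hne'
    (gs i) (hmem i) (gs j) (hmem j)
end

section
/- With L the metabelian Lie algebra of the previous context (basis a₁,…,a_m, b₁,…,b_m, [aᵢ,bⱼ]=δ_{ij}bⱼ, all other brackets of basis elements zero), the multilinear left-normed monomials f_j = [x₁, x_j, x_{i₃},…,x_{i_n}] with 2 ≤ j ≤ n and {i₃<…<i_n} = {2,…,n}∖{j} are linearly independent modulo the polynomial identities of L; hence the ordinary codimension sequence satisfies c_n(L) = n − 1 for all n ≥ 2. -/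
/-!
Since `[L, L]` lies in the abelian span of the `bᵢ`, `L` satisfies `[[x, y], [z, t]] = 0`.
By the Jacobi identity this makes `[[c, y], z] = [[c, z], y]` for every commutator `c`, so a
left-normed monomial is symmetric in all letters after the first two, and antisymmetric in those.
A further application of the Jacobi identity expresses `[x_p, x_q, …]` as
`[x₁, x_q, …] - [x₁, x_p, …]`, so the `f_j` span all multilinear monomials. They are
independent because `f_j` is the only one not vanishing at `x_j = b₁`, `xᵢ = a₁` (`i ≠ j`),
where it equals `±b₁`.
-/

/-- Evaluation of the left-normed Lie monomial `[x_{l₁}, x_{l₂}, …, x_{l_t}]` on a tuple `x`. -/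
def evalWord {n : ℕ} {L : Type*} [LieRing L] (x : Fin n → L) : List (Fin n) → L
  | [] => 0
  | a :: t => t.foldl (fun acc i => ⁅acc, x i⁆) (x a)

open List

section LeftNormed

variable {ι L : Type*} [LieRing L] (x : ι → L)

def leftNormed (c : L) (t : List ι) : L := t.foldl (fun acc i => ⁅acc, x i⁆) c

@[simp] lemma leftNormed_cons (c : L) (i : ι) (t : List ι) :
    leftNormed x c (i :: t) = leftNormed x ⁅c, x i⁆ t := rfl

lemma leftNormed_zero (t : List ι) : leftNormed x 0 t = 0 := by
  induction t with
  | nil => rfl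
  | cons i t ih => rwa [leftNormed_cons, zero_lie]

lemma leftNormed_add (c d : L) (t : List ι) :
    leftNormed x (c + d) t = leftNormed x c t + leftNormed x d t := by
  induction t generalizing c d with
  | nil => rfl
  | cons i t ih => simp only [leftNormed_cons, add_lie, ih]

lemma leftNormed_neg (c : L) (t : List ι) : leftNormed x (-c) t = -leftNormed x c t := by
  induction t generalizing c with
  | nil => rfl
  | cons i t ih => simp only [leftNormed_cons, neg_lie, ih]

lemma leftNormed_ne_zero {a b : L} (hab : ⁅a, b⁆ = b) (hb : b ≠ 0) {t : List ι}
    (ht : ∀ i ∈ t, x i = a) : leftNormed x b t ≠ 0 := by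
  induction t with
  | nil => exact hb
  | cons i t ih =>
    rw [leftNormed_cons, ht i mem_cons_self, ← lie_skew, hab, leftNormed_neg, neg_ne_zero]
    exact ih fun k hk => ht k (mem_cons_of_mem i hk)

end LeftNormed

section Words

variable {N : ℕ} {L : Type*} [LieRing L] (x : Fin N → L)

lemma evalWord_cons_cons (p q : Fin N) (t : List (Fin N)) :
    evalWord x (p :: q :: t) = leftNormed x ⁅x p, x q⁆ t := rfl

lemma evalWord_swap (p q : Fin N) (t : List (Fin N)) :
    evalWord x (p :: q :: t) = -evalWord x (q :: p :: t) := by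
  rw [evalWord_cons_cons, evalWord_cons_cons, ← lie_skew, leftNormed_neg]

lemma evalWord_jacobi (p q r : Fin N) (t : List (Fin N)) :
    evalWord x (p :: q :: r :: t) + evalWord x (q :: r :: p :: t)
      + evalWord x (r :: p :: q :: t) = 0 := by
  have jacobi : ⁅⁅x p, x q⁆, x r⁆ + ⁅⁅x q, x r⁆, x p⁆ + ⁅⁅x r, x p⁆, x q⁆ = 0 := by
    rw [← lie_skew ⁅x p, x q⁆, ← lie_skew ⁅x q, x r⁆, ← lie_skew ⁅x r, x p⁆, ← neg_add,
      ← neg_add, lie_jacobi, neg_zero]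
  simp only [evalWord_cons_cons, leftNormed_cons, ← leftNormed_add, jacobi, leftNormed_zero]

end Words

def IsMetabelian (L : Type*) [LieRing L] : Prop := ∀ a b c d : L, ⁅⁅a, b⁆, ⁅c, d⁆⁆ = 0

section Metabelian

variable {L : Type*} [LieRing L] (hL : IsMetabelian L)
include hL

lemma IsMetabelian.lie_lie_right_comm (a b y z : L) :
    ⁅⁅⁅a, b⁆, y⁆, z⁆ = ⁅⁅⁅a, b⁆, z⁆, y⁆ := by
  rw [lie_lie, hL, zero_sub, ← lie_skew, neg_neg]

lemma IsMetabelian.leftNormed_perm {ι : Type*} (x : ι → L) {t₁ t₂ : List ι} (h : t₁ ~ t₂)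
    (a b : L) : leftNormed x ⁅a, b⁆ t₁ = leftNormed x ⁅a, b⁆ t₂ := by
  induction h generalizing a b with
  | nil => rfl
  | cons i _ ih => exact ih _ _
  | swap i j t => simp only [leftNormed_cons, hL.lie_lie_right_comm]
  | trans _ _ ih₁ ih₂ => rw [ih₁, ih₂]

lemma IsMetabelian.evalWord_perm {N : ℕ} (x : Fin N → L) (p q : Fin N) {t₁ t₂ : List (Fin N)}
    (h : t₁ ~ t₂) : evalWord x (p :: q :: t₁) = evalWord x (p :: q :: t₂) :=
  hL.leftNormed_perm x h _ _

end Metabelian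

lemma isMetabelian_of_basis {F L : Type*} [Field F] [LieRing L] [LieAlgebra F L] {m : ℕ}
    (v : Module.Basis (Fin m ⊕ Fin m) F L)
    (haa : ∀ i j : Fin m, ⁅v (Sum.inl i), v (Sum.inl j)⁆ = 0)
    (hbb : ∀ i j : Fin m, ⁅v (Sum.inr i), v (Sum.inr j)⁆ = 0)
    (hab : ∀ i j : Fin m,
      ⁅v (Sum.inl i), v (Sum.inr j)⁆ = if i = j then v (Sum.inr j) else 0) :
    IsMetabelian L := by
  set B := Submodule.span F (Set.range (v ∘ Sum.inr))
  have hvB (i : Fin m) : v (Sum.inr i) ∈ B := Submodule.subset_span ⟨i, rfl⟩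
  have basis_lie_mem : ∀ i j, ⁅v i, v j⁆ ∈ B := by
    rintro (i | i) (j | j)
    · simp [haa]
    · rw [hab]; split_ifs <;> simp [hvB]
    · rw [← lie_skew, hab]; split_ifs <;> simp [hvB]
    · simp [hbb]
  have lie_mem (y z : L) : ⁅y, z⁆ ∈ B := by
    have : (LieModule.toEnd F L L : L →ₗ[F] L →ₗ[F] L).compr₂ B.mkQ = 0 :=
      LinearMap.ext_basis v v fun i j => (Submodule.Quotient.mk_eq_zero B).2 (basis_lie_mem i j)
    simpa using LinearMap.congr_fun₂ this y z
  have lie_eq_zero {c d : L} (hc : c ∈ B) (hd : d ∈ B) : ⁅c, d⁆ = 0 := by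
    induction hc, hd using Submodule.span_induction₂ with
    | mem_mem c d hc hd =>
      obtain ⟨i, rfl⟩ := hc
      obtain ⟨j, rfl⟩ := hd
      exact hbb i j
    | zero_left => exact zero_lie _
    | zero_right => exact lie_zero _
    | add_left => simp_all [add_lie]
    | add_right => simp_all [lie_add]
    | smul_left => simp_all [smul_lie]
    | smul_right => simp_all [lie_smul]
  exact fun a b c d => lie_eq_zero (lie_mem a b) (lie_mem c d)

section BasicWords

variable {N : ℕ} [NeZero N]

def basicWord (j : Fin N) : List (Fin N) :=
  0 :: j :: (finRange N).filter fun i => decide (i ≠ 0 ∧ i ≠ j)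

variable (L : Type*) [LieRing L]

-- The paper's `f_j`, with letters indexed from `0` instead of `1`.
def basicPoly (j : Fin N) (x : Fin N → L) : L := evalWord x (basicWord j)

variable {L}

lemma basicWord_perm {j : Fin N} (hj : j ≠ 0) : basicWord j ~ finRange N := by
  rw [perm_ext_iff_of_nodup _ (nodup_finRange N)]
  · intro i
    simp only [basicWord, mem_cons, mem_filter, mem_finRange, true_and, decide_eq_true_eq]
    tauto
  · refine Nodup.cons ?_ (Nodup.cons ?_ ((nodup_finRange N).filter _)) <;> simp [hj, hj.symm]

lemma basicPoly_update_of_ne {a : L} (b : L) {i j : Fin N} (hi : i ≠ j) (hj : j ≠ 0) :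
    basicPoly L i (Function.update (fun _ => a) j b) = 0 := by
  rw [basicPoly, basicWord, evalWord_cons_cons, Function.update_of_ne hi,
    Function.update_of_ne hj.symm, lie_self, leftNormed_zero]

lemma basicPoly_update_self_ne_zero {a b : L} (hab : ⁅a, b⁆ = b) (hb : b ≠ 0) {j : Fin N}
    (hj : j ≠ 0) : basicPoly L j (Function.update (fun _ => a) j b) ≠ 0 := by
  rw [basicPoly, basicWord, evalWord_cons_cons, Function.update_self,
    Function.update_of_ne hj.symm, hab]
  refine leftNormed_ne_zero _ hab hb fun i hi => Function.update_of_ne ?_ _ _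
  simp_all

lemma linearIndependent_basicPoly {F : Type*} [Field F] [LieAlgebra F L] {a b : L}
    (hab : ⁅a, b⁆ = b) (hb : b ≠ 0) :
    LinearIndependent F fun j : {i : Fin N // i ≠ 0} => basicPoly L j.1 := by
  rw [Fintype.linearIndependent_iff]
  intro g hg j
  have h := congrFun hg (Function.update (fun _ => a) j.1 b)
  rw [Finset.sum_apply, Fintype.sum_eq_single j fun i hi => ?_] at h
  · exact (smul_eq_zero.1 h).resolve_right (basicPoly_update_self_ne_zero hab hb j.2)
  · rw [Pi.smul_apply, basicPoly_update_of_ne b (Subtype.coe_ne_coe.2 hi) j.2, smul_zero]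

end BasicWords

lemma exists_perm_map_finRange_eq {N : ℕ} {l : List (Fin N)} (h : l ~ finRange N) :
    ∃ σ : Equiv.Perm (Fin N), (finRange N).map σ = l := by
  have hlen : l.length = N := by simpa using h.length_eq
  refine ⟨(finCongr hlen.symm).trans ((h.nodup_iff.2 (nodup_finRange N)).getEquivOfForallMemList l
    fun i => h.mem_iff.2 (mem_finRange i)), ?_⟩
  rw [← ofFn_eq_map]
  exact ext_get (by simp [hlen]) fun k _ _ => by simp [Nodup.getEquivOfForallMemList]

section Spanning

variable {F L : Type*} [Field F] [LieRing L] [LieAlgebra F L] (hL : IsMetabelian L)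
include hL

lemma IsMetabelian.evalWord_eq_basicPoly {N : ℕ} [NeZero N] (x : Fin N → L) {q : Fin N}
    {t : List (Fin N)} (hq : q ≠ 0) (h : (0 :: q :: t) ~ finRange N) :
    evalWord x (0 :: q :: t) = basicPoly L q x :=
  hL.evalWord_perm x 0 q <| (perm_cons _).1 <| (perm_cons _).1 <| h.trans (basicWord_perm hq).symm

lemma IsMetabelian.evalWord_mem_span_basicPoly {n : ℕ} {l : List (Fin (n + 2))}
    (hl : l ~ finRange (n + 2)) :
    (fun x => evalWord x l) ∈
      Submodule.span F (Set.range fun j : {i : Fin (n + 2) // i ≠ 0} => basicPoly L j.1) := by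
  set S := Submodule.span F (Set.range fun j : {i : Fin (n + 2) // i ≠ 0} => basicPoly L j.1)
  have mem_of_head_zero {q t} (h : (0 :: q :: t) ~ finRange (n + 2)) :
      (fun x => evalWord x (0 :: q :: t)) ∈ S := by
    have hq : q ≠ 0 := by
      have := h.nodup_iff.2 (nodup_finRange _)
      simp_all [eq_comm]
    rw [funext fun x => hL.evalWord_eq_basicPoly x hq h]
    exact Submodule.subset_span ⟨⟨q, hq⟩, rfl⟩
  have rotate {a b c : Fin (n + 2)} {t} : (a :: b :: c :: t) ~ (c :: b :: a :: t) :=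
    ((Perm.swap _ _ _).trans ((Perm.swap _ _ _).cons _)).trans (Perm.swap _ _ _)
  obtain ⟨p, q, t, rfl⟩ : ∃ p q t, l = p :: q :: t := by
    have hlen : l.length = n + 2 := by simpa using hl.length_eq
    rcases l with _ | ⟨p, _ | ⟨q, t⟩⟩ <;> simp at hlen ⊢
  by_cases hp : p = 0
  · subst hp
    exact mem_of_head_zero hl
  by_cases hq : q = 0
  · subst hq
    convert S.neg_mem (mem_of_head_zero ((Perm.swap _ _ _).trans hl)) using 1
    exact funext fun x => evalWord_swap x p 0 t
  · have h0 : 0 ∈ t := by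
      have := hl.mem_iff.2 (mem_finRange 0)
      simp_all [eq_comm]
    have ht := perm_cons_erase h0
    have hl' := ((ht.cons q).cons p).symm.trans hl
    convert S.sub_mem (mem_of_head_zero (rotate.trans hl'))
      (mem_of_head_zero (((Perm.swap _ _ _).cons 0).trans (rotate.trans hl'))) using 1
    funext x
    have jacobi := evalWord_jacobi x p q 0 (t.erase 0)
    rw [evalWord_swap x q 0] at jacobi
    rw [hL.evalWord_perm x p q ht, Pi.sub_apply, ← sub_eq_zero, ← jacobi]
    abel

lemma IsMetabelian.span_evalWord_perm_eq {n : ℕ} :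
    Submodule.span F (Set.range fun σ : Equiv.Perm (Fin (n + 2)) => fun x : Fin (n + 2) → L =>
      evalWord x ((finRange (n + 2)).map σ)) =
      Submodule.span F (Set.range fun j : {i : Fin (n + 2) // i ≠ 0} => basicPoly L j.1) := by
  refine le_antisymm (Submodule.span_le.2 ?_) (Submodule.span_le.2 ?_)
  · rintro _ ⟨σ, rfl⟩
    exact hL.evalWord_mem_span_basicPoly σ.map_finRange_perm
  · rintro _ ⟨j, rfl⟩
    obtain ⟨σ, hσ⟩ := exists_perm_map_finRange_eq (basicWord_perm j.2)
    exact Submodule.subset_span ⟨σ, funext fun x => congrArg (evalWord x) hσ⟩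

end Spanning

theorem stmt14_general (F L : Type*) [Field F] [LieRing L] [LieAlgebra F L]
    (m : ℕ) (hm : 0 < m) (v : Module.Basis (Fin m ⊕ Fin m) F L)
    (haa : ∀ i j : Fin m, ⁅v (Sum.inl i), v (Sum.inl j)⁆ = 0)
    (hbb : ∀ i j : Fin m, ⁅v (Sum.inr i), v (Sum.inr j)⁆ = 0)
    (hab : ∀ i j : Fin m,
        ⁅v (Sum.inl i), v (Sum.inr j)⁆ = if i = j then v (Sum.inr j) else 0)
    (n : ℕ) :
    LinearIndependent F
      (fun (j : {i : Fin (n + 2) // i ≠ 0}) => fun x : Fin (n + 2) → L =>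
        evalWord x ((0 : Fin (n + 2)) :: (j : Fin (n + 2)) ::
          ((List.finRange (n + 2)).filter
            fun i => decide (i ≠ 0 ∧ i ≠ (j : Fin (n + 2)))))) ∧
    Module.finrank F
      ↥(Submodule.span F
        (Set.range fun σ : Equiv.Perm (Fin (n + 2)) => fun x : Fin (n + 2) → L =>
          evalWord x ((List.finRange (n + 2)).map σ))) = n + 1 := by
  have hL : IsMetabelian L := isMetabelian_of_basis v haa hbb hab
  have hli : LinearIndependent F fun j : {i : Fin (n + 2) // i ≠ 0} => basicPoly L j.1 :=
    linearIndependent_basicPoly (by simpa using hab ⟨0, hm⟩ ⟨0, hm⟩) (v.ne_zero _)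
  refine ⟨hli, ?_⟩
  rw [hL.span_evalWord_perm_eq, finrank_span_eq_card hli]
  simp [Fintype.card_subtype_compl]

/-- With `L` the `2m`-dimensional metabelian Lie algebra with basis `a₁,…,a_m, b₁,…,b_m` and
`[aᵢ,bⱼ] = δ_{ij}bⱼ` (all other brackets of basis vectors zero), the multilinear left-normed
monomials `f_j = [x₁, x_j, x_{i₃},…,x_{i_n}]` (`2 ≤ j ≤ n`, remaining indices increasing) are
linearly independent modulo the identities of `L` (i.e. as multilinear functions on `L`);
hence the codimension sequence satisfies `c_n(L) = n − 1` for all `n ≥ 2`. -/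
theorem stmt14 (F L : Type*) [Field F] [CharZero F] [LieRing L] [LieAlgebra F L]
    (m : ℕ) (hm : 0 < m) (v : Module.Basis (Fin m ⊕ Fin m) F L)
    (haa : ∀ i j : Fin m, ⁅v (Sum.inl i), v (Sum.inl j)⁆ = 0)
    (hbb : ∀ i j : Fin m, ⁅v (Sum.inr i), v (Sum.inr j)⁆ = 0)
    (hab : ∀ i j : Fin m,
        ⁅v (Sum.inl i), v (Sum.inr j)⁆ = if i = j then v (Sum.inr j) else 0)
    (n : ℕ) :
    LinearIndependent F
      (fun (j : {i : Fin (n + 2) // i ≠ 0}) => fun x : Fin (n + 2) → L =>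
        evalWord x ((0 : Fin (n + 2)) :: (j : Fin (n + 2)) ::
          ((List.finRange (n + 2)).filter
            fun i => decide (i ≠ 0 ∧ i ≠ (j : Fin (n + 2)))))) ∧
    Module.finrank F
      ↥(Submodule.span F
        (Set.range fun σ : Equiv.Perm (Fin (n + 2)) => fun x : Fin (n + 2) → L =>
          evalWord x ((List.finRange (n + 2)).map σ))) = n + 1 :=
  stmt14_general F L m hm v haa hbb hab n
end

section
/- Let L be a finite-dimensional Lie algebra over a field F of characteristic 0 such that for some group G grading L, L = ⊕_{g∈G} L^(g) is graded-simple. If some homogeneous component L^(g) is nonzero and L equals the sum of all nonzero left-normed commutators [L^(g), L^(g₁),…,L^(g_t)], then g commutes with every element of the support {h ∈ G : L^(h) ≠ 0}; consequently the support of the grading on a graded-simple finite-dimensional Lie algebra generates an abelian subgroup of G. -/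
/-!
Fix `g` in the support and let `H` be its centralizer. The elements `z` with `⁅z, n⁆ = 0` for
every homogeneous `n` of degree outside `H` form a subspace `Z` that is stable under brackets
with homogeneous elements of degree in `H`, by the Jacobi identity, since `H` times the
complement of `H` lies in the complement. Hence `⨆ k ∈ H, L^(k) ⊓ Z` is a graded ideal. It
contains `L^(g)`, because two homogeneous elements whose degrees do not commute have bracket of
degree both `g h` and `h g`, hence zero. By graded-simplicity the ideal is all of `L`, so `L` is
concentrated in degrees from `H`.
-/

namespace GradedLieAlgebra

variable {R L G : Type*} [CommRing R] [LieRing L] [LieAlgebra R L] [Group G]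
  {V : G → Submodule R L}

theorem lie_eq_zero_of_not_commute (hind : iSupIndep V)
    (hgr : ∀ g h : G, ∀ x ∈ V g, ∀ y ∈ V h, ⁅x, y⁆ ∈ V (g * h))
    {g h : G} (hgh : ¬Commute g h) {x y : L} (hx : x ∈ V g) (hy : y ∈ V h) : ⁅x, y⁆ = 0 := by
  have hxy' : ⁅x, y⁆ ∈ V (h * g) := by
    rw [← lie_skew]
    exact neg_mem (hgr _ _ _ hy _ hx)
  exact Submodule.disjoint_def.mp (hind.pairwiseDisjoint hgh) _ (hgr _ _ _ hx _ hy) hxy'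

variable (V) in
def centralizerOutside (H : Subgroup G) : Submodule R L where
  carrier := {z | ∀ h ∉ H, ∀ n ∈ V h, ⁅z, n⁆ = 0}
  add_mem' hz hw h hh n hn := by rw [add_lie, hz h hh n hn, hw h hh n hn, add_zero]
  zero_mem' _ _ _ _ := zero_lie _
  smul_mem' c _ hz h hh n hn := by rw [smul_lie, hz h hh n hn, smul_zero]

theorem lie_mem_centralizerOutside (hgr : ∀ g h : G, ∀ x ∈ V g, ∀ y ∈ V h, ⁅x, y⁆ ∈ V (g * h))
    {H : Subgroup G} {k : G} {z x : L} (hz : z ∈ centralizerOutside V H) (hk : k ∈ H)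
    (hx : x ∈ V k) : ⁅z, x⁆ ∈ centralizerOutside V H := by
  intro h hh n hn
  have hkh : k * h ∉ H := (H.mul_mem_cancel_left hk).not.mpr hh
  rw [lie_lie, hz h hh n hn, lie_zero, sub_zero]
  exact hz _ hkh _ (hgr _ _ _ hx _ hn)

theorem lie_mem_iSup_inf_centralizerOutside
    (hgr : ∀ g h : G, ∀ x ∈ V g, ∀ y ∈ V h, ⁅x, y⁆ ∈ V (g * h)) (htop : ⨆ g, V g = ⊤)
    (H : Subgroup G) {x m : L} (hm : m ∈ ⨆ k ∈ H, V k ⊓ centralizerOutside V H) :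
    ⁅x, m⁆ ∈ ⨆ k ∈ H, V k ⊓ centralizerOutside V H := by
  set I := ⨆ k ∈ H, V k ⊓ centralizerOutside V H
  suffices I ≤ I.comap (LieAlgebra.ad R L x) from this hm
  refine iSup₂_le fun k hk z hz => ?_
  suffices ⊤ ≤ I.comap (LieAlgebra.ad R L z) by
    show ⁅x, z⁆ ∈ I
    rw [← lie_skew]
    exact neg_mem (this Submodule.mem_top)
  rw [← htop]
  refine iSup_le fun j y hy => ?_
  show ⁅z, y⁆ ∈ I
  by_cases hj : j ∈ H
  · exact Submodule.mem_iSup_of_mem (k * j) <| Submodule.mem_iSup_of_mem (H.mul_mem hk hj)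
      ⟨hgr _ _ _ hz.1 _ hy, lie_mem_centralizerOutside hgr hz.2 hj hy⟩
  · rw [hz.2 j hj y hy]
    exact zero_mem I

variable (V) in
def lieIdealOfSubgroup (hgr : ∀ g h : G, ∀ x ∈ V g, ∀ y ∈ V h, ⁅x, y⁆ ∈ V (g * h))
    (htop : ⨆ g, V g = ⊤) (H : Subgroup G) : LieIdeal R L :=
  { (⨆ k ∈ H, V k ⊓ centralizerOutside V H : Submodule R L) with
    lie_mem := lie_mem_iSup_inf_centralizerOutside hgr htop H }

theorem lieIdealOfSubgroup_toSubmodule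
    (hgr : ∀ g h : G, ∀ x ∈ V g, ∀ y ∈ V h, ⁅x, y⁆ ∈ V (g * h)) (htop : ⨆ g, V g = ⊤)
    (H : Subgroup G) :
    (lieIdealOfSubgroup V hgr htop H).toSubmodule = ⨆ k ∈ H, V k ⊓ centralizerOutside V H :=
  rfl

theorem lieIdealOfSubgroup_toSubmodule_eq_iSup_inf
    (hgr : ∀ g h : G, ∀ x ∈ V g, ∀ y ∈ V h, ⁅x, y⁆ ∈ V (g * h)) (htop : ⨆ g, V g = ⊤)
    (H : Subgroup G) :
    (lieIdealOfSubgroup V hgr htop H).toSubmodule =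
      ⨆ g, (lieIdealOfSubgroup V hgr htop H).toSubmodule ⊓ V g := by
  rw [lieIdealOfSubgroup_toSubmodule]
  refine le_antisymm (iSup₂_le fun k hk => le_iSup_of_le k ?_) (iSup_le fun _ => inf_le_left)
  exact le_inf (le_iSup₂_of_le k hk le_rfl) inf_le_left

theorem mem_of_isGradedSimple (hind : iSupIndep V) (htop : ⨆ g, V g = ⊤)
    (hgr : ∀ g h : G, ∀ x ∈ V g, ∀ y ∈ V h, ⁅x, y⁆ ∈ V (g * h))
    (hsimple : ∀ I : LieIdeal R L,
        I.toSubmodule = (⨆ g : G, (I.toSubmodule ⊓ V g)) → I = ⊥ ∨ I = ⊤)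
    {H : Subgroup G} {g : G} (hg : g ∈ H) (hVg : V g ≠ ⊥)
    (hVgH : V g ≤ centralizerOutside V H) {h : G} (hVh : V h ≠ ⊥) : h ∈ H := by
  set I := lieIdealOfSubgroup V hgr htop H
  have hgI : V g ≤ I.toSubmodule := le_iSup₂_of_le g hg (le_inf le_rfl hVgH)
  have hItop : I = ⊤ := by
    refine (hsimple I (lieIdealOfSubgroup_toSubmodule_eq_iSup_inf hgr htop H)).resolve_left ?_
    rintro hbot
    rw [hbot, LieSubmodule.bot_toSubmodule] at hgI
    exact hVg (le_bot_iff.mp hgI)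
  have hhH : V h ≤ ⨆ k ∈ H, V k :=
    calc V h ≤ I.toSubmodule := by rw [hItop, LieSubmodule.top_toSubmodule]; exact le_top
      _ ≤ ⨆ k ∈ H, V k := iSup₂_mono fun _ _ => inf_le_left
  by_contra hh
  exact hVh ((hind.disjoint_biSup hh).eq_bot_of_le hhH)

theorem commute_of_isGradedSimple (hind : iSupIndep V) (htop : ⨆ g, V g = ⊤)
    (hgr : ∀ g h : G, ∀ x ∈ V g, ∀ y ∈ V h, ⁅x, y⁆ ∈ V (g * h))
    (hsimple : ∀ I : LieIdeal R L,
        I.toSubmodule = (⨆ g : G, (I.toSubmodule ⊓ V g)) → I = ⊥ ∨ I = ⊤)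
    {g h : G} (hVg : V g ≠ ⊥) (hVh : V h ≠ ⊥) : Commute g h := by
  have hVgH : V g ≤ centralizerOutside V (Subgroup.centralizer {g}) :=
    fun y hy k hk n hn => lie_eq_zero_of_not_commute hind hgr
      (fun hgk => hk (Subgroup.mem_centralizer_singleton_iff.mpr hgk.eq.symm)) hy hn
  have hh := mem_of_isGradedSimple hind htop hgr hsimple
    (Subgroup.mem_centralizer_singleton_iff.mpr rfl) hVg hVgH hVh
  exact (Subgroup.mem_centralizer_singleton_iff.mp hh).symm

end GradedLieAlgebra

theorem Subgroup.commute_of_mem_closure {G : Type*} [Group G] {S : Set G}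
    (hS : ∀ x ∈ S, ∀ y ∈ S, Commute x y) :
    ∀ x ∈ closure S, ∀ y ∈ closure S, Commute x y :=
  fun x hx y hy => Set.centralizer_centralizer_comm_of_comm hS
    x (closure_le_centralizer_centralizer S hx) y (closure_le_centralizer_centralizer S hy)

open GradedLieAlgebra in
theorem stmt17_general (F L G : Type*) [Field F] [LieRing L] [LieAlgebra F L]
    [Group G] [DecidableEq G]
    (V : G → Submodule F L) (hdec : DirectSum.IsInternal V)
    (hgr : ∀ g h : G, ∀ x ∈ V g, ∀ y ∈ V h, ⁅x, y⁆ ∈ V (g * h))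
    (hsimple : ∀ I : LieIdeal F L,
        I.toSubmodule = (⨆ g : G, (I.toSubmodule ⊓ V g)) → I = ⊥ ∨ I = ⊤) :
    (∀ g h : G, V g ≠ ⊥ → V h ≠ ⊥ → Commute g h) ∧
    (∀ x ∈ Subgroup.closure {g : G | V g ≠ ⊥},
     ∀ y ∈ Subgroup.closure {g : G | V g ≠ ⊥}, Commute x y) := by
  have hsupp : ∀ g h : G, V g ≠ ⊥ → V h ≠ ⊥ → Commute g h := fun _ _ =>
    commute_of_isGradedSimple hdec.submodule_iSupIndep hdec.submodule_iSup_eq_top hgr hsimple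
  exact ⟨hsupp, Subgroup.commute_of_mem_closure fun x hx y hy => hsupp x y hx hy⟩

/-- Let `L = ⊕_{g∈G} L^(g)` be a finite-dimensional graded-simple Lie algebra over a field of
characteristic `0`.  Then any two elements of the support `{g : L^(g) ≠ 0}` commute;
consequently the support generates an abelian subgroup of `G`. -/
theorem stmt17 (F L G : Type*) [Field F] [CharZero F] [LieRing L] [LieAlgebra F L]
    [FiniteDimensional F L] [Group G] [DecidableEq G]
    (V : G → Submodule F L) (hdec : DirectSum.IsInternal V)
    (hgr : ∀ g h : G, ∀ x ∈ V g, ∀ y ∈ V h, ⁅x, y⁆ ∈ V (g * h))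
    (hnonab : ∃ x y : L, ⁅x, y⁆ ≠ 0)
    (hsimple : ∀ I : LieIdeal F L,
        I.toSubmodule = (⨆ g : G, (I.toSubmodule ⊓ V g)) → I = ⊥ ∨ I = ⊤) :
    (∀ g h : G, V g ≠ ⊥ → V h ≠ ⊥ → Commute g h) ∧
    (∀ x ∈ Subgroup.closure {g : G | V g ≠ ⊥},
     ∀ y ∈ Subgroup.closure {g : G | V g ≠ ⊥}, Commute x y) :=
  stmt17_general F L G V hdec hgr hsimple
end
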